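/- Let X̂, Q, Û be finite nonempty sets, F ⊆ Q, and δ ∈ [0,1]. For each n ∈ ℕ let t_n : X̂ × Û → (X̂ → ℝ) satisfy t_n(x̂,û)(x̂') ≥ 0 and Σ_{x̂'∈X̂} t_n(x̂,û)(x̂') = 1, and let S assign to each pair (q, x̂') ∈ Q × X̂ a nonempty subset S(q,x̂') ⊆ Q. Define V̄*_n, V*_n : X̂ × Q → ℝ by: V̄*_0(x̂,q) = 1_F(q); V̄*_{n+1}(x̂,q) = 1 if q ∈ F, and otherwise V̄*_{n+1}(x̂,q) = max_{û∈Û} (1−δ)·Σ_{x̂'∈X̂} (min_{q'∈S(q,x̂')} V̄*_n(x̂',q'))·t_n(x̂,û)(x̂'); V*_0 ≡ 0; V*_{n+1}(x̂,q) = L( max_{û∈Û} Σ_{x̂'∈X̂} (min_{q'∈S(q,x̂')} max(1_F(q'), V*_n(x̂',q')))·t_n(x̂,û)(x̂') − δ ), where L(t) := min(1, max(0,t)). Then V*_n(x̂,q) ≤ V̄*_n(x̂,q) for all n ∈ ℕ, x̂ ∈ X̂, q ∈ Q. -/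
import Mathlib


/-- The paper's optimal Bellman recursion `V̄*_n` (no adversarial inputs):
`V̄*_0(x̂,q) = 1_F(q)`; `V̄*_{n+1}(x̂,q) = 1` if `q ∈ F`, and otherwise
`V̄*_{n+1}(x̂,q) = max_{û ∈ Û} (1−δ) Σ_{x̂'} (min_{q' ∈ S(q,x̂')} V̄*_n(x̂',q')) t_n(x̂,û)(x̂')`. -/
noncomputable def VbarStar {X Q U : Type*} [Fintype X] [Fintype U] [Nonempty U]
    [DecidableEq Q]
    (F : Finset Q) (δ : ℝ) (t : ℕ → X → U → X → ℝ) (S : Q → X → Finset Q)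
    (hS : ∀ (q : Q) (x' : X), (S q x').Nonempty) : ℕ → X → Q → ℝ
  | 0 => fun _ q => if q ∈ F then 1 else 0
  | n + 1 => fun x q =>
      if q ∈ F then 1
      else Finset.univ.sup' Finset.univ_nonempty fun u : U =>
        (1 - δ) *
          ∑ x' : X, ((S q x').inf' (hS q x') fun q' => VbarStar F δ t S hS n x' q') * t n x u x'

/-- The optimal recursion `V*_n` of Haesaert et al. with truncation
`L(t) = min(1, max(0, t))`: `V*_0 ≡ 0`;
`V*_{n+1}(x̂,q) = L(max_{û ∈ Û} Σ_{x̂'} (min_{q' ∈ S(q,x̂')} max(1_F(q'), V*_n(x̂',q'))) t_n(x̂,û)(x̂') − δ)`. -/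
noncomputable def VStar {X Q U : Type*} [Fintype X] [Fintype U] [Nonempty U]
    [DecidableEq Q]
    (F : Finset Q) (δ : ℝ) (t : ℕ → X → U → X → ℝ) (S : Q → X → Finset Q)
    (hS : ∀ (q : Q) (x' : X), (S q x').Nonempty) : ℕ → X → Q → ℝ
  | 0 => fun _ _ => 0
  | n + 1 => fun x q =>
      min 1 (max 0
        ((Finset.univ.sup' Finset.univ_nonempty fun u : U =>
            ∑ x' : X, ((S q x').inf' (hS q x') fun q' =>
              max (if q' ∈ F then (1 : ℝ) else 0) (VStar F δ t S hS n x' q')) * t n x u x') - δ))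

lemma VbarStar_bounds
    {X Q U : Type*} [Fintype X] [Fintype U] [Nonempty U] [DecidableEq Q]
    (F : Finset Q) (δ : ℝ) (hδ0 : 0 ≤ δ) (hδ1 : δ ≤ 1)
    (t : ℕ → X → U → X → ℝ) (S : Q → X → Finset Q)
    (hS : ∀ (q : Q) (x' : X), (S q x').Nonempty)
    (ht0 : ∀ (n : ℕ) (x : X) (u : U) (x' : X), 0 ≤ t n x u x')
    (ht1 : ∀ (n : ℕ) (x : X) (u : U), ∑ x' : X, t n x u x' = 1) :
    ∀ (n : ℕ) (x : X) (q : Q),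
      0 ≤ VbarStar F δ t S hS n x q ∧ VbarStar F δ t S hS n x q ≤ 1 := by
  intro n
  induction n with
  | zero =>
    intro x q
    simp only [VbarStar]
    split <;> norm_num
  | succ n ih =>
    intro x q
    simp only [VbarStar]
    split
    · norm_num
    · constructor
      · apply Finset.le_sup'_of_le _ (Finset.mem_univ (Classical.arbitrary U))
        apply mul_nonneg (by linarith)
        apply Finset.sum_nonneg
        intro x' _
        apply mul_nonneg _ (ht0 n x _ x')
        apply Finset.le_inf'
        intro q' _
        exact (ih x' q').1
      · apply Finset.sup'_le
        intro u _
        have h1 : ∑ x' : X, ((S q x').inf' (hS q x') fun q' => VbarStar F δ t S hS n x' q') * t n x u x'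
            ≤ ∑ x' : X, 1 * t n x u x' := by
          apply Finset.sum_le_sum
          intro x' _
          apply mul_le_mul_of_nonneg_right _ (ht0 n x u x')
          obtain ⟨q', hq'⟩ := hS q x'
          exact le_trans (Finset.inf'_le _ hq') (ih x' q').2
        have h2 : ∑ x' : X, 1 * t n x u x' = 1 := by
          simpa using ht1 n x u
        have h0 : 0 ≤ ∑ x' : X,
            ((S q x').inf' (hS q x') fun q' => VbarStar F δ t S hS n x' q') * t n x u x' := by
          apply Finset.sum_nonneg
          intro x' _
          apply mul_nonneg _ (ht0 n x u x')
          apply Finset.le_inf'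
          intro q' _
          exact (ih x' q').1
        nlinarith

lemma VbarStar_one_of_mem
    {X Q U : Type*} [Fintype X] [Fintype U] [Nonempty U] [DecidableEq Q]
    (F : Finset Q) (δ : ℝ) (t : ℕ → X → U → X → ℝ) (S : Q → X → Finset Q)
    (hS : ∀ (q : Q) (x' : X), (S q x').Nonempty)
    (n : ℕ) (x : X) (q : Q) (hq : q ∈ F) : VbarStar F δ t S hS n x q = 1 := by
  cases n <;> simp [VbarStar, hq]

/-- **comparison of optimal Bellman operators.** For every `n`, `x̂`, `q`,
`V*_n(x̂,q) ≤ V̄*_n(x̂,q)`. -/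
theorem VStar_le_VbarStar
    {X Q U : Type*} [Fintype X] [Fintype Q] [Fintype U]
    [Nonempty X] [Nonempty Q] [Nonempty U] [DecidableEq Q]
    (F : Finset Q) (δ : ℝ) (hδ0 : 0 ≤ δ) (hδ1 : δ ≤ 1)
    (t : ℕ → X → U → X → ℝ) (S : Q → X → Finset Q)
    (hS : ∀ (q : Q) (x' : X), (S q x').Nonempty)
    (ht0 : ∀ (n : ℕ) (x : X) (u : U) (x' : X), 0 ≤ t n x u x')
    (ht1 : ∀ (n : ℕ) (x : X) (u : U), ∑ x' : X, t n x u x' = 1) :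
    ∀ (n : ℕ) (x : X) (q : Q), VStar F δ t S hS n x q ≤ VbarStar F δ t S hS n x q := by
  intro n
  induction n with
  | zero =>
    intro x q
    simp only [VStar, VbarStar]
    split <;> norm_num
  | succ n ih =>
    intro x q
    have hbnd := VbarStar_bounds F δ hδ0 hδ1 t S hS ht0 ht1
    simp only [VStar, VbarStar]
    split
    · exact min_le_left _ _
    · set A := Finset.univ.sup' Finset.univ_nonempty fun u : U =>
        ∑ x' : X, ((S q x').inf' (hS q x') fun q' => VbarStar F δ t S hS n x' q') * t n x u x'
        with hA
      -- each summand bound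
      have hsum : ∀ u : U,
          0 ≤ ∑ x' : X, ((S q x').inf' (hS q x') fun q' => VbarStar F δ t S hS n x' q') * t n x u x' ∧
          (∑ x' : X, ((S q x').inf' (hS q x') fun q' => VbarStar F δ t S hS n x' q') * t n x u x') ≤ 1 := by
        intro u
        constructor
        · apply Finset.sum_nonneg
          intro x' _
          exact mul_nonneg (Finset.le_inf' _ _ fun q' _ => (hbnd n x' q').1) (ht0 n x u x')
        · calc (∑ x' : X, ((S q x').inf' (hS q x') fun q' => VbarStar F δ t S hS n x' q') * t n x u x')
              ≤ ∑ x' : X, 1 * t n x u x' := by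
                apply Finset.sum_le_sum
                intro x' _
                apply mul_le_mul_of_nonneg_right _ (ht0 n x u x')
                obtain ⟨q', hq'⟩ := hS q x'
                exact le_trans (Finset.inf'_le _ hq') (hbnd n x' q').2
            _ = 1 := by simpa using ht1 n x u
      have hA0 : 0 ≤ A := by
        rw [hA]
        exact Finset.le_sup'_of_le _ (Finset.mem_univ (Classical.arbitrary U))
          (hsum (Classical.arbitrary U)).1
      have hA1 : A ≤ 1 := Finset.sup'_le _ _ fun u _ => (hsum u).2
      -- the V*-sup is ≤ A
      have hBA : (Finset.univ.sup' Finset.univ_nonempty fun u : U =>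
          ∑ x' : X, ((S q x').inf' (hS q x') fun q' =>
            max (if q' ∈ F then (1:ℝ) else 0) (VStar F δ t S hS n x' q')) * t n x u x') ≤ A := by
        rw [hA]
        apply Finset.sup'_le
        intro u _
        apply Finset.le_sup'_of_le _ (Finset.mem_univ u)
        apply Finset.sum_le_sum
        intro x' _
        apply mul_le_mul_of_nonneg_right _ (ht0 n x u x')
        apply Finset.le_inf'
        intro q' hq'
        refine le_trans (Finset.inf'_le _ hq') (max_le ?_ ?_)
        · split
          · exact le_of_eq (VbarStar_one_of_mem F δ t S hS n x' q' (by assumption)).symm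
          · exact (hbnd n x' q').1
        · exact ih x' q'
      -- (1-δ)*A is attained as a sup' value
      have hgoal : (1 - δ) * A ≤ Finset.univ.sup' Finset.univ_nonempty fun u : U =>
          (1 - δ) * ∑ x' : X,
            ((S q x').inf' (hS q x') fun q' => VbarStar F δ t S hS n x' q') * t n x u x' := by
        obtain ⟨u, _, hu⟩ := Finset.exists_mem_eq_sup' Finset.univ_nonempty fun u : U =>
          ∑ x' : X, ((S q x').inf' (hS q x') fun q' => VbarStar F δ t S hS n x' q') * t n x u x'
        rw [hA, hu]
        exact Finset.le_sup' (fun u : U => (1 - δ) * ∑ x' : X,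
          ((S q x').inf' (hS q x') fun q' => VbarStar F δ t S hS n x' q') * t n x u x')
          (Finset.mem_univ u)
      refine le_trans ?_ hgoal
      have h1 : max 0 ((Finset.univ.sup' Finset.univ_nonempty fun u : U =>
          ∑ x' : X, ((S q x').inf' (hS q x') fun q' =>
            max (if q' ∈ F then (1:ℝ) else 0) (VStar F δ t S hS n x' q')) * t n x u x') - δ)
          ≤ (1 - δ) * A := by
        apply max_le
        · exact mul_nonneg (by linarith) hA0
        · nlinarith
      exact le_trans (min_le_right _ _) h1
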